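/- For every m, n ≥ 2, the torus T(2m,2n) = C_{2m} □ C_{2n} admits an interval coloring with max{3m+n+2, 3n+m+2} colors; hence W(T(2m,2n)) ≥ max{3m+n+2, 3n+m+2}. -/

import Mathlib

open SimpleGraph

/-- `c` is an interval `t`-coloring of `G`: a proper edge-coloring with colors
`1,…,t`, every color used, and for each vertex the incident colors form an
interval of consecutive integers. -/
def IsIntervalColoring {V : Type*} (G : SimpleGraph V) (t : ℕ) (c : Sym2 V → ℕ) : Prop :=
  (∀ e ∈ G.edgeSet, c e ∈ Finset.Icc 1 t) ∧
  (∀ e₁ ∈ G.edgeSet, ∀ e₂ ∈ G.edgeSet, e₁ ≠ e₂ → (∃ v, v ∈ e₁ ∧ v ∈ e₂) → c e₁ ≠ c e₂) ∧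
  (∀ k ∈ Finset.Icc 1 t, ∃ e ∈ G.edgeSet, c e = k) ∧
  (∀ v : V, ∀ k₁ k₂ k : ℕ,
    (∃ e ∈ G.edgeSet, v ∈ e ∧ c e = k₁) → (∃ e ∈ G.edgeSet, v ∈ e ∧ c e = k₂) →
      k₁ ≤ k → k ≤ k₂ → ∃ e ∈ G.edgeSet, v ∈ e ∧ c e = k)

def HasIntervalColoring {V : Type*} (G : SimpleGraph V) (t : ℕ) : Prop :=
  ∃ c : Sym2 V → ℕ, IsIntervalColoring G t c

/-- `W G`: the greatest number of colors in an interval coloring of `G`. -/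
noncomputable def Wsup {V : Type*} (G : SimpleGraph V) : ℕ :=
  sSup {t | HasIntervalColoring G t}

/-- `w G`: the least number of colors in an interval coloring of `G`. -/
noncomputable def wlow {V : Type*} (G : SimpleGraph V) : ℕ :=
  sInf {t | HasIntervalColoring G t}

/-- The `n`-dimensional hypercube `Q_n`. -/
def hypercube (n : ℕ) : SimpleGraph (Fin n → Bool) where
  Adj u v := ∃! i, u i ≠ v i
  symm := by
    constructor
    rintro u v ⟨i, hi, hu⟩
    exact ⟨i, fun h => hi h.symm, fun j hj => hu j fun h => hj h.symm⟩
  loopless := by constructor; rintro u ⟨i, hi, -⟩; exact hi rfl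

lemma val_one'' (M : ℕ) [NeZero M] (h : 2 ≤ M) : (1 : Fin M).val = 1 := by
  rw [Fin.val_one']; exact Nat.mod_eq_of_lt (by omega)

lemma val_add_one (M : ℕ) [NeZero M] (h : 2 ≤ M) (u : Fin M) :
    (u + 1).val = (u.val + 1) % M := by
  rw [Fin.add_def, val_one'' M h]

lemma val_sub_one (M : ℕ) [NeZero M] (h : 2 ≤ M) (u : Fin M) :
    (u - 1).val = (u.val + (M - 1)) % M := by
  rw [Fin.sub_def, val_one'' M h]
  simp [Nat.add_comm]

lemma cyc_adj (M : ℕ) [NeZero M] (h : 2 ≤ M) (u v : Fin M) :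
    (cycleGraph M).Adj u v ↔ v = u + 1 ∨ u = v + 1 := by
  rw [cycleGraph_adj']
  have h1 : (1 : Fin M).val = 1 := val_one'' M h
  constructor
  · rintro (hh | hh)
    · right
      have : u - v = 1 := Fin.ext (by rw [hh, h1])
      rw [sub_eq_iff_eq_add] at this
      rw [this, add_comm]
    · left
      have : v - u = 1 := Fin.ext (by rw [hh, h1])
      rw [sub_eq_iff_eq_add] at this
      rw [this, add_comm]
  · rintro (hh | hh)
    · right; rw [hh, add_sub_cancel_left, h1]
    · left; rw [hh, add_sub_cancel_left, h1]

lemma mod_succ_char (M x y : ℕ) (hx : x < M) (hy : y < M) :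
    (x + 1) % M = y ↔ (x + 1 = y ∨ (x = M - 1 ∧ y = 0)) := by
  rcases Nat.lt_or_ge (x+1) M with h | h
  · rw [Nat.mod_eq_of_lt h]; omega
  · have : x + 1 = M := by omega
    rw [this, Nat.mod_self]; omega

namespace TIC

/-- tent function on the cycle `Fin (2m)`: 0,1,...,m,m-1,...,1 -/
def Ecy (m i : ℕ) : ℕ := min i (2*m - i)

/-- vertex level: `max (Ecy i) (Ecy (i-1))` -/
def psi (m i : ℕ) : ℕ := max (Ecy m i) (Ecy m ((i + (2*m - 1)) % (2*m)))

/-- horizontal column offsets -/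
def gcol (n j : ℕ) : ℕ := if j = 0 then 1 else if j ≤ n then 2 + 3*j else 6*n + 1 - 3*j

/-- vertical column offsets -/
def hcol (n j : ℕ) : ℕ := if j + 1 ≤ n then 4 + 3*j else 6*n - 3*j

/-- symmetric value for a cycle edge `{x,y}` from the tent `E` -/
def edgeVal (E : ℕ → ℕ) (x y : ℕ) : ℕ :=
  if x + 1 = y then E x else if y + 1 = x then E y else E (max x y)

lemma edgeVal_symm (E : ℕ → ℕ) (x y : ℕ) : edgeVal E x y = edgeVal E y x := by
  unfold edgeVal
  rcases eq_or_ne (x+1) y with h | h <;> rcases eq_or_ne (y+1) x with h' | h'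
  · omega
  · rw [if_pos h, if_neg h', if_pos h]
  · rw [if_neg h, if_pos h', if_pos h']
  · rw [if_neg h, if_neg h', if_neg h', if_neg h, Nat.max_comm]

def F (m n : ℕ) (u v : Fin (2*m) × Fin (2*n)) : ℕ :=
  if u.2 = v.2 then edgeVal (Ecy m) u.1.val v.1.val + gcol n u.2.val
  else if u.1 = v.1 then psi m u.1.val - 1 + edgeVal (hcol n) u.2.val v.2.val
  else 0

lemma F_symm (m n : ℕ) (u v : Fin (2*m) × Fin (2*n)) : F m n u v = F m n v u := by
  unfold F
  rcases eq_or_ne u.2 v.2 with h | h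
  · rw [if_pos h, if_pos h.symm, edgeVal_symm, h]
  · rcases eq_or_ne u.1 v.1 with h' | h'
    · rw [if_neg h, if_neg (Ne.symm h), if_pos h', if_pos h'.symm, edgeVal_symm, h']
    · rw [if_neg h, if_neg (Ne.symm h), if_neg h', if_neg (Ne.symm h')]

/-- the coloring -/
def col (m n : ℕ) : Sym2 (Fin (2*m) × Fin (2*n)) → ℕ :=
  Sym2.lift ⟨F m n, F_symm m n⟩

lemma col_mk (m n : ℕ) (u v : Fin (2*m) × Fin (2*n)) : col m n s(u, v) = F m n u v := rfl

/-- evaluation on a horizontal edge -/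
lemma col_h (m n : ℕ) (hm : 2 ≤ m) (u v : Fin (2*m) × Fin (2*n))
    (h2 : u.2 = v.2) (h1 : (u.1.val + 1) % (2*m) = v.1.val) :
    col m n s(u, v) = Ecy m u.1.val + gcol n u.2.val := by
  rw [col_mk]
  unfold F
  rw [if_pos h2]
  congr 1
  have hx := u.1.isLt
  have hy := v.1.isLt
  rcases Nat.lt_or_ge (u.1.val + 1) (2*m) with hlt | hge
  · rw [Nat.mod_eq_of_lt hlt] at h1
    unfold edgeVal
    rw [if_pos h1]
  · have hx1 : u.1.val = 2*m - 1 := by omega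
    have hy0 : v.1.val = 0 := by
      rw [← h1]; have : u.1.val + 1 = 2*m := by omega
      rw [this, Nat.mod_self]
    unfold edgeVal
    rw [if_neg (by omega), if_neg (by omega)]
    congr 1
    omega

/-- evaluation on a vertical edge -/
lemma col_v (m n : ℕ) (hm : 2 ≤ m) (hn : 2 ≤ n) (u v : Fin (2*m) × Fin (2*n))
    (h1 : u.1 = v.1) (h2 : (u.2.val + 1) % (2*n) = v.2.val) :
    col m n s(u, v) = psi m u.1.val - 1 + hcol n u.2.val := by
  rw [col_mk]
  unfold F
  have hx := u.2.isLt
  have hy := v.2.isLt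
  have hne : u.2 ≠ v.2 := by
    intro hEq
    rw [hEq] at h2
    rcases Nat.lt_or_ge (v.2.val + 1) (2*n) with hlt | hge
    · rw [Nat.mod_eq_of_lt hlt] at h2; omega
    · have : v.2.val + 1 = 2*n := by omega
      rw [this, Nat.mod_self] at h2; omega
  rw [if_neg hne, if_pos h1]
  congr 1
  rcases Nat.lt_or_ge (u.2.val + 1) (2*n) with hlt | hge
  · rw [Nat.mod_eq_of_lt hlt] at h2
    unfold edgeVal
    rw [if_pos h2]
  · have hx1 : u.2.val = 2*n - 1 := by omega
    have hy0 : v.2.val = 0 := by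
      rw [← h2]; have : u.2.val + 1 = 2*n := by omega
      rw [this, Nat.mod_self]
    unfold edgeVal
    rw [if_neg (by omega), if_neg (by omega)]
    congr 1
    omega

lemma modprev (N j : ℕ) (hN : 1 ≤ N) (hj : j < N) :
    (j + (N - 1)) % N = if j = 0 then N - 1 else j - 1 := by
  rcases eq_or_ne j 0 with h | h
  · subst h
    simp [Nat.mod_eq_of_lt (show N - 1 < N by omega)]
  · rw [if_neg h]
    have : j + (N - 1) = (j - 1) + N := by omega
    rw [this, Nat.add_mod_right, Nat.mod_eq_of_lt (by omega)]

lemma keyE (m i : ℕ) (hm : 2 ≤ m) (hi : i < 2*m) :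
    ((Ecy m i = psi m i ∧ Ecy m ((i + (2*m - 1)) % (2*m)) + 1 = psi m i) ∨
     (Ecy m i + 1 = psi m i ∧ Ecy m ((i + (2*m - 1)) % (2*m)) = psi m i)) ∧
    1 ≤ psi m i ∧ psi m i ≤ m := by
  have hmod := modprev (2*m) i (by omega) hi
  unfold psi Ecy
  rw [hmod]
  rcases eq_or_ne i 0 with h | h
  · rw [if_pos h, h]
    constructor
    · right; constructor <;> omega
    · omega
  · rw [if_neg h]
    rcases Nat.lt_or_ge i (m+1) with h2 | h2
    · constructor
      · left; constructor <;> omega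
      · omega
    · constructor
      · right; constructor <;> omega
      · omega

lemma gcol_bounds (n j : ℕ) (hn : 2 ≤ n) (hj : j < 2*n) :
    1 ≤ gcol n j ∧ gcol n j ≤ 3*n + 2 := by
  unfold gcol; split_ifs <;> omega

lemma hcol_bounds (n j : ℕ) (hn : 2 ≤ n) (hj : j < 2*n) :
    3 ≤ hcol n j ∧ hcol n j ≤ 3*n + 1 := by
  unfold hcol; split_ifs <;> omega

/-- pattern of the three column offsets at each column `j` -/
lemma keyGH (n j : ℕ) (hn : 2 ≤ n) (hj : j < 2*n) :
    (hcol n ((j + (2*n - 1)) % (2*n)) = gcol n j + 2 ∧ hcol n j = gcol n j + 3) ∨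
    (hcol n ((j + (2*n - 1)) % (2*n)) + 1 = gcol n j ∧ hcol n j = gcol n j + 2) ∨
    (hcol n ((j + (2*n - 1)) % (2*n)) + 1 = gcol n j ∧ hcol n j + 2 = gcol n j) ∨
    (hcol n ((j + (2*n - 1)) % (2*n)) = gcol n j + 2 ∧ hcol n j + 1 = gcol n j) := by
  have hmod := modprev (2*n) j (by omega) hj
  rw [hmod]
  rcases eq_or_ne j 0 with h | h
  · rw [if_pos h, h]
    left
    unfold gcol hcol
    split_ifs <;> omega
  · rw [if_neg h]
    rcases Nat.lt_or_ge j n with h2 | h2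
    · right; left
      unfold gcol hcol
      split_ifs <;> omega
    · rcases eq_or_ne j n with h3 | h3
      · right; right; left
        unfold gcol hcol
        split_ifs <;> omega
      · right; right; right
        unfold gcol hcol
        split_ifs <;> omega
/-- colors of the four edges at a vertex `w` -/
def cR (m n : ℕ) (w : Fin (2*m) × Fin (2*n)) : ℕ := Ecy m w.1.val + gcol n w.2.val
def cL (m n : ℕ) (w : Fin (2*m) × Fin (2*n)) : ℕ :=
  Ecy m ((w.1.val + (2*m - 1)) % (2*m)) + gcol n w.2.val
def cU (m n : ℕ) (w : Fin (2*m) × Fin (2*n)) : ℕ := psi m w.1.val - 1 + hcol n w.2.val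
def cD (m n : ℕ) (w : Fin (2*m) × Fin (2*n)) : ℕ :=
  psi m w.1.val - 1 + hcol n ((w.2.val + (2*n - 1)) % (2*n))

lemma four (m n : ℕ) (hm : 2 ≤ m) (hn : 2 ≤ n) (w : Fin (2*m) × Fin (2*n)) :
    ∃ B, 1 ≤ B ∧ B + 3 ≤ 3*n + m + 2 ∧
      (B ≤ cR m n w ∧ cR m n w ≤ B + 3) ∧ (B ≤ cL m n w ∧ cL m n w ≤ B + 3) ∧
      (B ≤ cU m n w ∧ cU m n w ≤ B + 3) ∧ (B ≤ cD m n w ∧ cD m n w ≤ B + 3) ∧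
      cR m n w ≠ cL m n w ∧ cR m n w ≠ cU m n w ∧ cR m n w ≠ cD m n w ∧
      cL m n w ≠ cU m n w ∧ cL m n w ≠ cD m n w ∧ cU m n w ≠ cD m n w ∧
      (∀ x, B ≤ x → x ≤ B + 3 →
        (x = cR m n w ∨ x = cL m n w ∨ x = cU m n w ∨ x = cD m n w)) := by
  obtain ⟨hE, hP1, hP2⟩ := keyE m w.1.val hm w.1.isLt
  have hGH := keyGH n w.2.val hn w.2.isLt
  have hga := gcol_bounds n w.2.val hn w.2.isLt
  have hhd := hcol_bounds n w.2.val hn w.2.isLt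
  have hhb := hcol_bounds n ((w.2.val + (2*n - 1)) % (2*n)) hn (Nat.mod_lt _ (by omega))
  unfold cR cL cU cD
  rcases hGH with ⟨hb, hd⟩ | ⟨hb, hd⟩ | ⟨hb, hd⟩ | ⟨hb, hd⟩
  · exact ⟨gcol n w.2.val + psi m w.1.val - 1, by omega, by omega, ⟨by omega, by omega⟩,
      ⟨by omega, by omega⟩, ⟨by omega, by omega⟩, ⟨by omega, by omega⟩, by omega, by omega,
      by omega, by omega, by omega, by omega, fun x h1 h2 => by omega⟩
  · exact ⟨gcol n w.2.val + psi m w.1.val - 2, by omega, by omega, ⟨by omega, by omega⟩,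
      ⟨by omega, by omega⟩, ⟨by omega, by omega⟩, ⟨by omega, by omega⟩, by omega, by omega,
      by omega, by omega, by omega, by omega, fun x h1 h2 => by omega⟩
  · exact ⟨gcol n w.2.val + psi m w.1.val - 3, by omega, by omega, ⟨by omega, by omega⟩,
      ⟨by omega, by omega⟩, ⟨by omega, by omega⟩, ⟨by omega, by omega⟩, by omega, by omega,
      by omega, by omega, by omega, by omega, fun x h1 h2 => by omega⟩
  · exact ⟨gcol n w.2.val + psi m w.1.val - 2, by omega, by omega, ⟨by omega, by omega⟩,
      ⟨by omega, by omega⟩, ⟨by omega, by omega⟩, ⟨by omega, by omega⟩, by omega, by omega,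
      by omega, by omega, by omega, by omega, fun x h1 h2 => by omega⟩
section WithNeZero
variable (m n : ℕ) [NeZero (2*m)] [NeZero (2*n)]

/-- the four canonical neighbours -/
def nR (w : Fin (2*m) × Fin (2*n)) : Fin (2*m) × Fin (2*n) := (w.1 + 1, w.2)
def nL (w : Fin (2*m) × Fin (2*n)) : Fin (2*m) × Fin (2*n) := (w.1 - 1, w.2)
def nU (w : Fin (2*m) × Fin (2*n)) : Fin (2*m) × Fin (2*n) := (w.1, w.2 + 1)
def nD (w : Fin (2*m) × Fin (2*n)) : Fin (2*m) × Fin (2*n) := (w.1, w.2 - 1)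

variable (hm : 2 ≤ m) (hn : 2 ≤ n)
include hm hn

lemma master (e : Sym2 (Fin (2*m) × Fin (2*n)))
    (he : e ∈ (cycleGraph (2*m) □ cycleGraph (2*n)).edgeSet)
    (w : Fin (2*m) × Fin (2*n)) (hw : w ∈ e) :
    e = s(w, nR m n w) ∨ e = s(w, nL m n w) ∨ e = s(w, nU m n w) ∨ e = s(w, nD m n w) := by
  induction e using Sym2.ind with
  | _ a b =>
    rw [mem_edgeSet, boxProd_adj] at he
    rw [Sym2.mem_iff] at hw
    unfold nR nL nU nD
    rcases he with ⟨hadj, heq⟩ | ⟨hadj, heq⟩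
    · rw [cyc_adj (2*m) (by omega)] at hadj
      rcases hw with hw | hw <;> subst hw <;> rcases hadj with h | h
      · left
        have : b = (w.1 + 1, w.2) := Prod.ext h heq.symm
        rw [this]
      · right; left
        have : b = (w.1 - 1, w.2) := Prod.ext (by rw [h, add_sub_cancel_right]) heq.symm
        rw [this]
      · right; left
        rw [Sym2.eq_swap]
        have : a = (w.1 - 1, w.2) := Prod.ext (by rw [h, add_sub_cancel_right]) heq
        rw [this]
      · left
        rw [Sym2.eq_swap]
        have : a = (w.1 + 1, w.2) := Prod.ext h heq
        rw [this]
    · rw [cyc_adj (2*n) (by omega)] at hadj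
      rcases hw with hw | hw <;> subst hw <;> rcases hadj with h | h
      · right; right; left
        have : b = (w.1, w.2 + 1) := Prod.ext heq.symm h
        rw [this]
      · right; right; right
        have : b = (w.1, w.2 - 1) := Prod.ext heq.symm (by rw [h, add_sub_cancel_right])
        rw [this]
      · right; right; right
        rw [Sym2.eq_swap]
        have : a = (w.1, w.2 - 1) := Prod.ext heq (by rw [h, add_sub_cancel_right])
        rw [this]
      · right; right; left
        rw [Sym2.eq_swap]
        have : a = (w.1, w.2 + 1) := Prod.ext heq h
        rw [this]

lemma mem_R (w : Fin (2*m) × Fin (2*n)) :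
    s(w, nR m n w) ∈ (cycleGraph (2*m) □ cycleGraph (2*n)).edgeSet := by
  rw [mem_edgeSet, boxProd_adj]
  exact Or.inl ⟨(cyc_adj (2*m) (by omega) _ _).2 (Or.inl rfl), rfl⟩

lemma mem_L (w : Fin (2*m) × Fin (2*n)) :
    s(w, nL m n w) ∈ (cycleGraph (2*m) □ cycleGraph (2*n)).edgeSet := by
  rw [mem_edgeSet, boxProd_adj]
  exact Or.inl ⟨(cyc_adj (2*m) (by omega) _ _).2 (Or.inr (sub_add_cancel w.1 1).symm), rfl⟩

lemma mem_U (w : Fin (2*m) × Fin (2*n)) :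
    s(w, nU m n w) ∈ (cycleGraph (2*m) □ cycleGraph (2*n)).edgeSet := by
  rw [mem_edgeSet, boxProd_adj]
  exact Or.inr ⟨(cyc_adj (2*n) (by omega) _ _).2 (Or.inl rfl), rfl⟩

lemma mem_D (w : Fin (2*m) × Fin (2*n)) :
    s(w, nD m n w) ∈ (cycleGraph (2*m) □ cycleGraph (2*n)).edgeSet := by
  rw [mem_edgeSet, boxProd_adj]
  exact Or.inr ⟨(cyc_adj (2*n) (by omega) _ _).2 (Or.inr (sub_add_cancel w.2 1).symm), rfl⟩

lemma col_R (w : Fin (2*m) × Fin (2*n)) : col m n s(w, nR m n w) = cR m n w := by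
  exact col_h m n hm w (nR m n w) rfl (val_add_one (2*m) (by omega) w.1).symm

lemma col_L (w : Fin (2*m) × Fin (2*n)) : col m n s(w, nL m n w) = cL m n w := by
  rw [Sym2.eq_swap]
  have h1 : ((w.1 - 1).val + 1) % (2*m) = w.1.val := by
    rw [← val_add_one (2*m) (by omega), sub_add_cancel]
  have := col_h m n hm (nL m n w) w rfl h1
  rw [this]
  unfold cL nL
  rw [val_sub_one (2*m) (by omega)]

lemma col_U (w : Fin (2*m) × Fin (2*n)) : col m n s(w, nU m n w) = cU m n w := by
  exact col_v m n hm hn w (nU m n w) rfl (val_add_one (2*n) (by omega) w.2).symm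

lemma col_D (w : Fin (2*m) × Fin (2*n)) : col m n s(w, nD m n w) = cD m n w := by
  rw [Sym2.eq_swap]
  have h1 : ((w.2 - 1).val + 1) % (2*n) = w.2.val := by
    rw [← val_add_one (2*n) (by omega), sub_add_cancel]
  have := col_v m n hm hn (nD m n w) w rfl h1
  rw [this]
  unfold cD nD
  rw [val_sub_one (2*n) (by omega)]

end WithNeZero
section Main
variable (m n : ℕ) [NeZero (2*m)] [NeZero (2*n)] (hm : 2 ≤ m) (hn : 2 ≤ n)
include hm hn

lemma exists_color (k : ℕ) (hk1 : 1 ≤ k) (hk2 : k ≤ 3*n + m + 2) :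
    ∃ e ∈ (cycleGraph (2*m) □ cycleGraph (2*n)).edgeSet, col m n e = k := by
  obtain ⟨i, j, hi, hj, hsum⟩ : ∃ i j, i ≤ m ∧ j < 2*n ∧ i + gcol n j = k := by
    rcases Nat.lt_or_ge k (m+2) with h | h
    · refine ⟨k-1, 0, by omega, by omega, ?_⟩
      have : gcol n 0 = 1 := by simp [gcol]
      omega
    · rcases Nat.lt_or_ge k (3*n+1) with h2 | h2
      · refine ⟨k - (k - (k+2)%3), (6*n+1-(k - (k+2)%3))/3, by omega, by omega, ?_⟩
        unfold gcol
        split_ifs <;> omega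
      · rcases eq_or_ne k (3*n+1) with h3 | h3
        · refine ⟨2, n-1, by omega, by omega, ?_⟩
          unfold gcol
          split_ifs <;> omega
        · refine ⟨k - (3*n+2), n, by omega, by omega, ?_⟩
          unfold gcol
          split_ifs <;> omega
  have hilt : i < 2*m := by omega
  set w : Fin (2*m) × Fin (2*n) := (⟨i, hilt⟩, ⟨j, hj⟩) with hw
  refine ⟨s(w, nR m n w), mem_R m n hm hn w, ?_⟩
  rw [col_R m n hm hn w]
  show Ecy m i + gcol n j = k
  unfold Ecy
  omega

theorem torus_coloring :
    HasIntervalColoring (cycleGraph (2*m) □ cycleGraph (2*n)) (3*n + m + 2) := by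
  refine ⟨col m n, ?_, ?_, ?_, ?_⟩
  · intro e he
    induction e using Sym2.ind with
    | _ a b =>
      obtain ⟨B, h1, h2, hbR, hbL, hbU, hbD, _, _, _, _, _, _, _⟩ := four m n hm hn a
      have hcR := col_R m n hm hn a
      have hcL := col_L m n hm hn a
      have hcU := col_U m n hm hn a
      have hcD := col_D m n hm hn a
      rw [Finset.mem_Icc]
      rcases master m n hm hn s(a,b) he a (Sym2.mem_mk_left a b) with h | h | h | h <;>
        simp only [h, hcR, hcL, hcU, hcD] <;> omega
  · rintro e1 he1 e2 he2 hne ⟨v, hv1, hv2⟩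
    obtain ⟨B, hB1, hB2, hbR, hbL, hbU, hbD, hRL, hRU, hRD, hLU, hLD, hUD, hcov⟩ :=
      four m n hm hn v
    have hcR := col_R m n hm hn v
    have hcL := col_L m n hm hn v
    have hcU := col_U m n hm hn v
    have hcD := col_D m n hm hn v
    rcases master m n hm hn e1 he1 v hv1 with h1 | h1 | h1 | h1 <;>
      rcases master m n hm hn e2 he2 v hv2 with h2 | h2 | h2 | h2 <;>
      first
        | exact absurd (h1.trans h2.symm) hne
        | (simp only [h1, h2, hcR, hcL, hcU, hcD]; omega)
  · intro k hk
    rw [Finset.mem_Icc] at hk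
    exact exists_color m n hm hn k hk.1 hk.2
  · rintro v k1 k2 k ⟨e1, he1, hv1, hk1e⟩ ⟨e2, he2, hv2, hk2e⟩ hk1 hk2
    obtain ⟨B, hB1, hB2, hbR, hbL, hbU, hbD, hRL, hRU, hRD, hLU, hLD, hUD, hcov⟩ :=
      four m n hm hn v
    have hcR := col_R m n hm hn v
    have hcL := col_L m n hm hn v
    have hcU := col_U m n hm hn v
    have hcD := col_D m n hm hn v
    have hk1B : B ≤ k1 ∧ k1 ≤ B + 3 := by
      rcases master m n hm hn e1 he1 v hv1 with h | h | h | h <;>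
        rw [h] at hk1e <;> simp only [hcR, hcL, hcU, hcD] at hk1e <;> omega
    have hk2B : B ≤ k2 ∧ k2 ≤ B + 3 := by
      rcases master m n hm hn e2 he2 v hv2 with h | h | h | h <;>
        rw [h] at hk2e <;> simp only [hcR, hcL, hcU, hcD] at hk2e <;> omega
    rcases hcov k (by omega) (by omega) with h | h | h | h
    · exact ⟨s(v, nR m n v), mem_R m n hm hn v, Sym2.mem_mk_left _ _, hcR.trans h.symm⟩
    · exact ⟨s(v, nL m n v), mem_L m n hm hn v, Sym2.mem_mk_left _ _, hcL.trans h.symm⟩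
    · exact ⟨s(v, nU m n v), mem_U m n hm hn v, Sym2.mem_mk_left _ _, hcU.trans h.symm⟩
    · exact ⟨s(v, nD m n v), mem_D m n hm hn v, Sym2.mem_mk_left _ _, hcD.trans h.symm⟩

end Main
end TIC

lemma transport {V W : Type*} {G : SimpleGraph V} {H : SimpleGraph W} (f : G ≃g H) {t : ℕ}
    (h : HasIntervalColoring H t) : HasIntervalColoring G t := by
  obtain ⟨c, h1, h2, h3, h4⟩ := h
  have hmem : ∀ e, e ∈ G.edgeSet ↔ Sym2.map f e ∈ H.edgeSet := by
    intro e
    induction e using Sym2.ind with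
    | _ a b => simp [Sym2.map_pair_eq, SimpleGraph.mem_edgeSet, f.map_adj_iff]
  have hinj : Function.Injective (Sym2.map (f : V → W)) :=
    Sym2.map.injective f.toEquiv.injective
  have hcomp : ∀ e', Sym2.map (f : V → W) (Sym2.map (f.symm : W → V) e') = e' := by
    intro e'
    induction e' using Sym2.ind with
    | _ a b => simp [Sym2.map_pair_eq]
  refine ⟨fun e => c (Sym2.map f e), ?_, ?_, ?_, ?_⟩
  · intro e he
    exact h1 _ ((hmem e).1 he)
  · rintro e1 he1 e2 he2 hne ⟨v, hv1, hv2⟩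
    exact h2 _ ((hmem e1).1 he1) _ ((hmem e2).1 he2) (fun hEq => hne (hinj hEq))
      ⟨f v, Sym2.mem_map.2 ⟨v, hv1, rfl⟩, Sym2.mem_map.2 ⟨v, hv2, rfl⟩⟩
  · intro k hk
    obtain ⟨e', he', hc⟩ := h3 k hk
    refine ⟨Sym2.map (f.symm : W → V) e', ?_, ?_⟩
    · rw [hmem, hcomp]; exact he'
    · show c (Sym2.map (f : V → W) (Sym2.map (f.symm : W → V) e')) = k
      rw [hcomp]
      exact hc
  · rintro v k1 k2 k ⟨e1, he1, hv1, hc1⟩ ⟨e2, he2, hv2, hc2⟩ hk1 hk2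
    obtain ⟨e', he', hfv, hc⟩ := h4 (f v) k1 k2 k
      ⟨Sym2.map f e1, (hmem e1).1 he1, Sym2.mem_map.2 ⟨v, hv1, rfl⟩, hc1⟩
      ⟨Sym2.map f e2, (hmem e2).1 he2, Sym2.mem_map.2 ⟨v, hv2, rfl⟩, hc2⟩ hk1 hk2
    refine ⟨Sym2.map (f.symm : W → V) e', ?_, ?_, ?_⟩
    · rw [hmem, hcomp]; exact he'
    · have : (f.symm : W → V) (f v) ∈ Sym2.map (f.symm : W → V) e' :=
        Sym2.mem_map.2 ⟨f v, hfv, rfl⟩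
      simpa using this
    · show c (Sym2.map (f : V → W) (Sym2.map (f.symm : W → V) e')) = k
      rw [hcomp]
      exact hc

lemma has_le_bound {V : Type*} [Fintype V] [DecidableEq V] {G : SimpleGraph V} {t : ℕ}
    (h : HasIntervalColoring G t) : t ≤ Fintype.card (Sym2 V) := by
  classical
  obtain ⟨c, -, -, h3, -⟩ := h
  rcases Nat.eq_zero_or_pos t with ht | ht
  · omega
  · have hne : Nonempty (Sym2 V) := by
      obtain ⟨e, -, -⟩ := h3 1 (by rw [Finset.mem_Icc]; omega)
      exact ⟨e⟩
    let fch : ℕ → Sym2 V := fun k =>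
      if hk : ∃ e ∈ G.edgeSet, c e = k then hk.choose else Classical.arbitrary _
    have hf : ∀ k ∈ Finset.Icc 1 t, c (fch k) = k := by
      intro k hk
      have hk' : ∃ e ∈ G.edgeSet, c e = k := h3 k hk
      show c (dite _ _ _) = k
      rw [dif_pos hk']
      exact hk'.choose_spec.2
    calc t = (Finset.Icc 1 t).card := by simp
      _ ≤ (Finset.univ : Finset (Sym2 V)).card :=
          Finset.card_le_card_of_injOn fch (fun _ _ => Finset.mem_univ _)
            (fun a ha b hb hEq => by rw [← hf a ha, ← hf b hb, hEq])
      _ = Fintype.card (Sym2 V) := rfl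

theorem stmt16 (m n : ℕ) (hm : 2 ≤ m) (hn : 2 ≤ n) :
    HasIntervalColoring (cycleGraph (2 * m) □ cycleGraph (2 * n))
      (max (3 * m + n + 2) (3 * n + m + 2)) ∧
    max (3 * m + n + 2) (3 * n + m + 2) ≤ Wsup (cycleGraph (2 * m) □ cycleGraph (2 * n)) := by
  haveI : NeZero (2*m) := ⟨by omega⟩
  haveI : NeZero (2*n) := ⟨by omega⟩
  have key : HasIntervalColoring (cycleGraph (2 * m) □ cycleGraph (2 * n))
      (max (3 * m + n + 2) (3 * n + m + 2)) := by
    rcases le_total m n with h | h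
    · have hmax : max (3 * m + n + 2) (3 * n + m + 2) = 3 * n + m + 2 := by omega
      rw [hmax]
      exact TIC.torus_coloring m n hm hn
    · have hmax : max (3 * m + n + 2) (3 * n + m + 2) = 3 * m + n + 2 := by omega
      rw [hmax]
      exact transport (SimpleGraph.boxProdComm _ _) (TIC.torus_coloring n m hn hm)
  refine ⟨key, ?_⟩
  exact le_csSup ⟨Fintype.card (Sym2 (Fin (2*m) × Fin (2*n))), fun x hx => has_le_bound hx⟩ key
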